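/- Let N be a finite set of agents and M a finite set of items with binary additive valuations v_i : M → {0,1}. Construct the fair-division-with-social-impact instance J with agent set N, item set M ∪ {g_i : i ∈ N} (one new special item g_i per agent i), valuations v'_i extending v_i and satisfying v'_i(g_i) = 0 and v'_i(g_j) = 1 for every j ≠ i, and social impacts given by s_i(g) = 1 for every g ∈ M, s_i(g_i) = 1, and s_i(g_j) = 0 for every j ≠ i. Then J admits an allocation that is simultaneously SIM and EF1 if and only if M admits an envy-free allocation with respect to the valuations (v_i). -/

import Mathlib

open Finset

variable {N M : Type*}

/-- The bundle of agent `i` under allocation `A` (items mapped to `i`). -/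
def bundle [Fintype M] [DecidableEq N] (A : M → N) (i : N) : Finset M :=
  Finset.univ.filter fun g => A g = i

/-- The (additive) value of a bundle `S` under the item-values `f`. -/
def val (f : M → ℕ) (S : Finset M) : ℕ := ∑ g ∈ S, f g

/-- An allocation is social impact maximizing (SIM). -/
def SIM [Fintype N] [Fintype M] [DecidableEq N] (s : N → M → ℕ) (A : M → N) : Prop :=
  ∀ A' : M → N, ∑ i : N, val (s i) (bundle A i) ≥ ∑ i : N, val (s i) (bundle A' i)

/-- An allocation is envy-free up to one item (EF1). -/
def EF1 [Fintype M] [DecidableEq N] [DecidableEq M] (v : N → M → ℕ) (A : M → N) : Prop :=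
  ∀ i j : N, ∃ g : M, val (v i) (bundle A i) ≥ val (v i) ((bundle A j).erase g)

/-- An allocation is envy-free (EF). -/
def EF [Fintype M] [DecidableEq N] (v : N → M → ℕ) (A : M → N) : Prop :=
  ∀ i j : N, val (v i) (bundle A i) ≥ val (v i) (bundle A j)

/-! Social welfare is additive over items, so an allocation is SIM exactly when every item goes to
an agent for whom its impact is largest. In `J` (where `Sum.inr j` is the special item `g_j`) this
forces `g_j` to agent `j` and leaves the standard items free, so the SIM allocations are the
`Sum.elim B id` with `B : M → N`. For these `v'_i(A_i) = v_i(B_i)` and `v'_i(A_j) = v_i(B_j) + 1`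
when `j ≠ i`; as no item is worth more than one, EF1 in `J` says exactly `v_i(B_i) ≥ v_i(B_j)`. -/

lemma val_elim_disjSum {K : Type*} (f : M → ℕ) (f' : K → ℕ) (S : Finset M) (T : Finset K) :
    val (Sum.elim f f') (S.disjSum T) = val f S + val f' T :=
  sum_disjSum S T _

lemma val_le_val_erase_add [DecidableEq M] (f : M → ℕ) (S : Finset M) (g : M) :
    val f S ≤ val f (S.erase g) + f g := by
  by_cases hg : g ∈ S
  · exact (sum_erase_add S f hg).ge
  · simp [erase_eq_of_notMem hg]

section Allocation

variable [DecidableEq N]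

lemma sum_val_bundle [Fintype N] [Fintype M] (s : N → M → ℕ) (A : M → N) :
    ∑ i, val (s i) (bundle A i) = ∑ g, s (A g) g := by
  calc ∑ i, ∑ g with A g = i, s i g = ∑ i, ∑ g with A g = i, s (A g) g :=
        sum_congr rfl fun i _ => sum_congr rfl fun g hg => by rw [(mem_filter.1 hg).2]
    _ = ∑ g, s (A g) g := sum_fiberwise _ _ _

lemma sim_iff_forall_le [Fintype N] [Fintype M] (s : N → M → ℕ) (A : M → N) :
    SIM s A ↔ ∀ g i, s i g ≤ s (A g) g := by
  simp only [SIM, sum_val_bundle]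
  refine ⟨fun h g i => ?_, fun h A' => sum_le_sum fun g _ => h g (A' g)⟩
  by_contra! hlt
  classical
  refine (h (Function.update A g i)).not_gt (sum_lt_sum (fun g' _ => ?_) ⟨g, by simpa⟩)
  rcases eq_or_ne g' g with rfl | hg
  · simpa using hlt.le
  · simp [hg]

lemma bundle_sum_elim {K : Type*} [Fintype M] [Fintype K] (B : M → N) (C : K → N) (i : N) :
    bundle (Sum.elim B C) i = (bundle B i).disjSum (bundle C i) := by
  ext (g | k) <;> simp [bundle]

lemma bundle_id [Fintype N] (i : N) : bundle id i = {i} := by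
  ext; simp [bundle]

lemma EF1.val_bundle_le_add_one [Fintype M] [DecidableEq M]
    {v : N → M → ℕ} {A : M → N} (h : EF1 v A) (hv : ∀ i g, v i g ≤ 1) (i j : N) :
    val (v i) (bundle A j) ≤ val (v i) (bundle A i) + 1 := by
  obtain ⟨g, hg⟩ := h i j
  have := val_le_val_erase_add (v i) (bundle A j) g
  have := hv i g
  omega

end Allocation

section Reduction

variable [DecidableEq N]

def reductionValuation (v : N → M → ℕ) (i : N) : M ⊕ N → ℕ :=
  Sum.elim (v i) fun j => if j = i then 0 else 1

def reductionImpact (i : N) : M ⊕ N → ℕ :=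
  Sum.elim (fun _ => 1) fun j => if j = i then 1 else 0

lemma sim_reductionImpact_iff [Fintype N] [Fintype M] (A : M ⊕ N → N) :
    SIM reductionImpact A ↔ ∀ j, A (Sum.inr j) = j := by
  rw [sim_iff_forall_le]
  refine ⟨fun h j => ?_, ?_⟩
  · by_contra hj
    simpa [reductionImpact, Ne.symm hj] using h (Sum.inr j) j
  rintro h (g | j) i
  · simp [reductionImpact]
  · simp only [reductionImpact, Sum.elim_inr, h j, if_true]
    split_ifs <;> simp

variable [Fintype N] [Fintype M] (v : N → M → ℕ) (B : M → N)

lemma val_reductionValuation_bundle (i j : N) :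
    val (reductionValuation v i) (bundle (Sum.elim B id) j) =
      val (v i) (bundle B j) + if j = i then 0 else 1 := by
  rw [bundle_sum_elim, bundle_id, reductionValuation, val_elim_disjSum]
  simp [_root_.val]

lemma val_reductionValuation_bundle_erase [DecidableEq M] (i j : N) :
    val (reductionValuation v i) ((bundle (Sum.elim B id) j).erase (Sum.inr j)) =
      val (v i) (bundle B j) := by
  have : (bundle (Sum.elim B id) j).erase (Sum.inr j) = (bundle B j).disjSum ∅ := by
    ext (g | k) <;> simp [bundle, eq_comm]
  rw [this, reductionValuation, val_elim_disjSum]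
  simp [_root_.val]

variable {v B}

lemma EF.ef1_reduction [DecidableEq M] (h : EF v B) :
    EF1 (reductionValuation v) (Sum.elim B id) := fun i j =>
  ⟨Sum.inr j, by
    rw [val_reductionValuation_bundle_erase, val_reductionValuation_bundle, if_pos rfl, add_zero]
    exact h i j⟩

lemma EF.of_ef1_reduction [DecidableEq M] (hv : ∀ i g, v i g ≤ 1)
    (h : EF1 (reductionValuation v) (Sum.elim B id)) : EF v B := by
  intro i j
  obtain rfl | hji := eq_or_ne j i
  · exact le_rfl
  have hv' : ∀ i g, reductionValuation v i g ≤ 1 := by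
    rintro i (g | k)
    · exact hv i g
    · simp only [reductionValuation, Sum.elim_inr]
      split_ifs <;> simp
  have := h.val_bundle_le_add_one hv' i j
  rw [val_reductionValuation_bundle, val_reductionValuation_bundle, if_pos rfl, if_neg hji] at this
  omega

end Reduction

/-- The reduction instance `J`: items `M ⊕ N` (standard items `Sum.inl g` plus one
special item `Sum.inr i` per agent `i`), extended valuations
(`v'_i(g_i) = 0`, `v'_i(g_j) = 1` for `j ≠ i`) and social impacts
(`s_i(g) = 1` for all `g ∈ M`, `s_i(g_i) = 1`, `s_i(g_j) = 0` for `j ≠ i`).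
It admits a SIM and EF1 allocation iff `M` admits an EF allocation w.r.t. `v`. -/
theorem sim_ef1_iff_ef
    [Fintype N] [Fintype M] [DecidableEq N] [DecidableEq M]
    (v : N → M → ℕ) (hv : ∀ i g, v i g ≤ 1) :
    (∃ A : M ⊕ N → N,
        SIM (fun i => Sum.elim (fun _ : M => 1) (fun j : N => if j = i then 1 else 0)) A ∧
        EF1 (fun i => Sum.elim (v i) (fun j : N => if j = i then 0 else 1)) A) ↔
    (∃ B : M → N, EF v B) := by
  constructor
  · rintro ⟨A, hSIM, hEF1⟩
    have hA : Sum.elim (A ∘ Sum.inl) id = A := by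
      ext (g | j)
      · rfl
      · exact ((sim_reductionImpact_iff A).1 hSIM j).symm
    exact ⟨A ∘ Sum.inl, EF.of_ef1_reduction hv (hA ▸ hEF1)⟩
  · rintro ⟨B, hB⟩
    exact ⟨Sum.elim B id, (sim_reductionImpact_iff _).2 fun _ => rfl, hB.ef1_reduction⟩
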